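/- Let λ be an infinite cardinal, G a countable graph, and H a graph of size λ. If the set of α < λ⁺ such that G_α embeds into H as an induced subgraph is unbounded in λ⁺, then G embeds into H as an induced subgraph. -/

import Mathlib

open Cardinal Ordinal

/-- The poset `T α`: strictly decreasing finite lists of ordinals `< α`, ordered by
reverse strict-prefix; the empty list is the top element, and the lists starting with `β`
form the copy of `T β`. -/
def TT (α : Ordinal) : Type 1 :=
  {l : List Ordinal // l.Pairwise (· > ·) ∧ ∀ x ∈ l, x < α}

instance instPOTT (α : Ordinal) : PartialOrder (TT α) where
  le u v := v.1 <+: u.1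
  le_refl u := List.prefix_refl _
  le_trans _ _ _ h1 h2 := List.IsPrefix.trans h2 h1
  le_antisymm _ _ h1 h2 :=
    Subtype.ext (List.IsPrefix.eq_of_length h2 ((List.IsPrefix.length_le h2).antisymm (List.IsPrefix.length_le h1)))

/-- The top element of `T α`. -/
def topT (α : Ordinal) : TT α := ⟨[], by simp, by simp⟩

/-- The rank function of the reversed order `⟨T α, >⟩`. -/
def dT {α : Ordinal} (v : TT α) : ℕ := v.1.length

/-- The rank function of `⟨T α, <⟩`; the top element has rank `α`. -/
def rT {α : Ordinal} (v : TT α) : Ordinal := v.1.getLastD α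

/-- The graph `G_α` on `T α`: `u ~ v` iff `u, v` are comparable and `d u ~_G d v`. -/
def Gg (G : SimpleGraph ℕ) (α : Ordinal) : SimpleGraph (TT α) where
  Adj u v := u ≠ v ∧ (u ≤ v ∨ v ≤ u) ∧ G.Adj (dT u) (dT v)
  symm := ⟨fun _ _ h => ⟨Ne.symm h.1, h.2.1.symm, h.2.2.symm⟩⟩
  loopless := ⟨fun _ h => h.1 rfl⟩

/-- The one-way infinite path `P_ω` on `ℕ`. -/
def rayG : SimpleGraph ℕ := SimpleGraph.fromRel (fun m n => n = m + 1)

/-- `A` is a (not necessarily induced) subgraph of `B`. -/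
def SubCopy {X Y : Type*} (A : SimpleGraph X) (B : SimpleGraph Y) : Prop :=
  ∃ f : X ↪ Y, ∀ u v, A.Adj u v → B.Adj (f u) (f v)

/-- `R` is (isomorphic to) the countable random graph: the extension property. -/
def IsRado (R : SimpleGraph ℕ) : Prop :=
  ∀ A B : Finset ℕ, Disjoint A B →
    ∃ v, v ∉ A ∧ v ∉ B ∧ (∀ a ∈ A, R.Adj v a) ∧ (∀ b ∈ B, ¬R.Adj v b)

/-- An `(s, ξ)`-embedding: an induced embedding of some `G_α`, `ξ ≤ α < λ⁺`, into `H`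
whose image contains `s` as the top part of a chain with `d`-values `0, …, n` and whose
last vertex has rank `> ξ`. -/
def IsSXEmb {V : Type} (G : SimpleGraph ℕ) (lam : Cardinal) (H : SimpleGraph V)
    (s : List V) (ξ : Ordinal) : Prop :=
  ∃ α : Ordinal, ξ ≤ α ∧ α < (Order.succ lam).ord ∧
    ∃ (f : Gg G α ↪g H) (t : List (TT α)),
      s = t.map ⇑f ∧
      (∀ i : Fin t.length, dT (t.get i) = i.1) ∧
      (∀ u ∈ t, ∀ v ∈ t, u ≤ v ∨ v ≤ u) ∧
      (∀ v ∈ t.getLast?, ξ < rT v)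

/-- The set `U` of finite sequences admitting `(s, ξ)`-embeddings for all `ξ < λ⁺`. -/
def UU {V : Type} (G : SimpleGraph ℕ) (lam : Cardinal) (H : SimpleGraph V) :
    Set (List V) :=
  {s | ∀ ξ < (Order.succ lam).ord, IsSXEmb G lam H s ξ}

/-!
Let `U` be the set of finite sequences `s` in `H` such that for every `ξ < λ⁺` some `G_α`,
`ξ ≤ α < λ⁺`, embeds into `H` with `s` the image of an initial segment of a branch whose lowest
point has rank `> ξ`. The hypothesis puts `[]` in `U`. If `s ∈ U`, then for each `ξ` an embedding
for `ξ + 1` can be prolonged one step down the branch (to the child labelled `ξ + 1`), giving some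
`v` with `s ++ [v]` good for `ξ`; as `|H| = λ < cf λ⁺`, a single `v` works for cofinally many `ξ`,
hence for all of them, so `s ++ [v] ∈ U`. Iterating yields an infinite sequence in `H` whose
first `n` terms span an induced copy of `G` restricted to `{0, …, n - 1}`, for every `n`.
-/

lemma List.getLastD_le_of_pairwise_gt {β : Type*} [Preorder β] {l : List β}
    (hl : l.Pairwise (· > ·)) (d : β) {a : β} (ha : a ∈ l) : l.getLastD d ≤ a := by
  induction l generalizing d with
  | nil => simp at ha
  | cons b l ih =>
    rw [List.getLastD_cons]
    rcases List.mem_cons.1 ha with rfl | ha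
    · rcases List.mem_cons.1 (List.getLastD_mem_cons (l := l) (a := a)) with h | h
      · exact h.le
      · exact ((List.pairwise_cons.1 hl).1 _ h).le
    · exact ih hl.of_cons b ha

lemma Ordinal.exists_forall_lt_of_mk_lt_cof {V : Type u} {o : Ordinal.{u}} (hV : #V < o.cof)
    {P : V → Ordinal.{u} → Prop} (hP : ∀ v {ξ ξ'}, ξ' ≤ ξ → P v ξ → P v ξ')
    (h : ∀ ξ < o, ∃ v, P v ξ) : ∃ v, ∀ ξ < o, P v ξ := by
  by_contra! hcon
  choose b hbo hb using hcon
  obtain ⟨v, hv⟩ := h _ (Ordinal.iSup_lt_of_lt_cof hV hbo)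
  exact hb v (hP v (Ordinal.le_iSup b v) hv)

lemma List.exists_seq_of_forall_exists_append {V : Type*} {P : List V → Prop} (h₀ : P [])
    (h : ∀ s, P s → ∃ v, P (s ++ [v])) : ∃ g : ℕ → V, ∀ n, P ((List.range n).map g) := by
  choose ext hext using fun s : {s // P s} => h s.1 s.2
  let seq : ℕ → {s // P s} := fun n => Nat.rec ⟨[], h₀⟩ (fun _ s => ⟨s.1 ++ [ext s], hext s⟩) n
  refine ⟨fun n => ext (seq n), fun n => ?_⟩
  suffices (seq n).1 = (List.range n).map fun n => ext (seq n) from this ▸ (seq n).2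
  induction n with
  | zero => rfl
  | succ n ih => simp only [seq, List.range_succ, List.map_append, ← ih]; rfl

namespace TT

variable {α : Ordinal}

lemma rT_le (u : TT α) : rT u ≤ α := by
  rcases List.mem_cons.1 (List.getLastD_mem_cons (l := u.1) (a := α)) with h | h
  · exact h.le
  · exact (u.2.2 _ h).le

lemma rT_le_of_mem {u : TT α} {x : Ordinal} (hx : x ∈ u.1) : rT u ≤ x :=
  List.getLastD_le_of_pairwise_gt u.2.1 α hx

def child (u : TT α) (γ : Ordinal) (hγ : γ < rT u) : TT α :=
  ⟨u.1 ++ [γ],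
    List.pairwise_append.2 ⟨u.2.1, List.pairwise_singleton _ _, fun _ hx _ hy =>
      List.mem_singleton.1 hy ▸ hγ.trans_le (rT_le_of_mem hx)⟩,
    fun x hx => (List.mem_append.1 hx).elim (u.2.2 x) fun hx =>
      List.mem_singleton.1 hx ▸ hγ.trans_le (rT_le u)⟩

lemma rT_child (u : TT α) (γ : Ordinal) (hγ : γ < rT u) : rT (child u γ hγ) = γ :=
  List.getLastD_concat

lemma dT_child (u : TT α) (γ : Ordinal) (hγ : γ < rT u) : dT (child u γ hγ) = dT u + 1 := by
  simp [child, dT]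

lemma child_le (u : TT α) (γ : Ordinal) (hγ : γ < rT u) : child u γ hγ ≤ u :=
  List.prefix_append _ _

lemma dT_topT : dT (topT α) = 0 := rfl

lemma le_of_comparable_of_dT_le {u v : TT α} (h : u ≤ v ∨ v ≤ u) (hd : dT u ≤ dT v) : v ≤ u := by
  refine h.elim (fun h => ?_) id
  have : v = u := Subtype.ext (List.IsPrefix.eq_of_length h (h.length_le.antisymm hd))
  exact this.le

end TT

section Embeddings

variable {V : Type} {G : SimpleGraph ℕ} {lam : Cardinal} {H : SimpleGraph V} {s : List V}
  {ξ : Ordinal}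

lemma IsSXEmb.mono {ξ' : Ordinal} (h : IsSXEmb G lam H s ξ) (hle : ξ' ≤ ξ) :
    IsSXEmb G lam H s ξ' := by
  obtain ⟨α, hξα, hα, f, t, hs, hd, hc, hr⟩ := h
  exact ⟨α, hle.trans hξα, hα, f, t, hs, hd, hc, fun v hv => hle.trans_lt (hr v hv)⟩

lemma dT_lt_length_of_mem {α : Ordinal} {t : List (TT α)}
    (hd : ∀ i : Fin t.length, dT (t.get i) = i.1) {u : TT α} (hu : u ∈ t) : dT u < t.length := by
  obtain ⟨i, rfl⟩ := List.mem_iff_get.1 hu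
  exact hd i ▸ i.2

lemma isSXEmb_append {α : Ordinal} (hξα : ξ ≤ α) (hα : α < (Order.succ lam).ord)
    (f : Gg G α ↪g H) {t : List (TT α)} (hd : ∀ i : Fin t.length, dT (t.get i) = i.1)
    (hc : ∀ u ∈ t, ∀ v ∈ t, u ≤ v ∨ v ≤ u) {w : TT α} (hwd : dT w = t.length)
    (hwt : ∀ u ∈ t, w ≤ u) (hwr : ξ < rT w) :
    IsSXEmb G lam H (t.map f ++ [f w]) ξ := by
  refine ⟨α, hξα, hα, f, t ++ [w], by simp, fun ⟨i, hi⟩ => ?_, ?_, ?_⟩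
  · simp only [List.get_eq_getElem, List.getElem_append]
    split_ifs with h
    · exact hd ⟨i, h⟩
    · simp only [List.length_append, List.length_singleton] at hi
      simp [hwd, show i = t.length by omega]
  · simp only [List.mem_append, List.mem_singleton]
    rintro u (hu | rfl) v (hv | rfl)
    · exact hc u hu v hv
    · exact Or.inr (hwt u hu)
    · exact Or.inl (hwt v hv)
    · exact Or.inl le_rfl
  · simpa only [List.getLast?_concat, Option.mem_some_iff, forall_eq'] using hwr

lemma IsSXEmb.exists_append (h : IsSXEmb G lam H s (Order.succ ξ)) :
    ∃ v, IsSXEmb G lam H (s ++ [v]) ξ := by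
  obtain ⟨α, hξα, hα, f, t, rfl, hd, hc, hr⟩ := h
  have hξα' : ξ < α := (Order.lt_succ ξ).trans_le hξα
  rcases List.eq_nil_or_concat' t with rfl | ⟨t, u, rfl⟩
  · exact ⟨_, isSXEmb_append hξα'.le hα f hd hc TT.dT_topT (by simp) hξα'⟩
  · have hu : Order.succ ξ < rT u := hr u (by simp)
    have hdu : dT u = t.length := by simpa using hd ⟨t.length, by simp⟩
    have hu_le : ∀ x ∈ t ++ [u], u ≤ x := fun x hx =>
      TT.le_of_comparable_of_dT_le (hc x hx u (by simp)) <| by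
        have := dT_lt_length_of_mem hd hx
        simp only [List.length_append, List.length_singleton] at this
        omega
    refine ⟨_, isSXEmb_append hξα'.le hα f hd hc (w := TT.child u _ hu) ?_
      (fun x hx => (TT.child_le u _ hu).trans (hu_le x hx)) ?_⟩
    · simp [TT.dT_child, hdu]
    · simpa only [TT.rT_child] using Order.lt_succ ξ

lemma IsSXEmb.adj_getElem_iff (h : IsSXEmb G lam H s ξ) {i j : ℕ} (hi : i < s.length)
    (hj : j < s.length) : H.Adj s[i] s[j] ↔ G.Adj i j := by
  obtain ⟨α, -, -, f, t, rfl, hd, hc, -⟩ := h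
  simp only [List.length_map] at hi hj
  have hdi : dT t[i] = i := hd ⟨i, hi⟩
  have hdj : dT t[j] = j := hd ⟨j, hj⟩
  simp only [List.getElem_map, f.map_adj_iff]
  change t[i] ≠ t[j] ∧ (t[i] ≤ t[j] ∨ t[j] ≤ t[i]) ∧ G.Adj (dT t[i]) (dT t[j]) ↔ _
  rw [hdi, hdj]
  refine ⟨fun h => h.2.2, fun hG => ⟨fun he => hG.ne ?_, hc _ (by simp) _ (by simp), hG⟩⟩
  rw [← hdi, ← hdj, he]

lemma IsSXEmb.getElem_inj (h : IsSXEmb G lam H s ξ) {i j : ℕ} (hi : i < s.length)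
    (hj : j < s.length) (he : s[i] = s[j]) : i = j := by
  obtain ⟨α, -, -, f, t, rfl, hd, -, -⟩ := h
  simp only [List.length_map, List.getElem_map] at hi hj he
  have hdi : dT t[i] = i := hd ⟨i, hi⟩
  have hdj : dT t[j] = j := hd ⟨j, hj⟩
  rw [← hdi, ← hdj]
  exact congrArg dT (f.injective he)

def embeddingOfIsSXEmb {g : ℕ → V} (hg : ∀ n, IsSXEmb G lam H ((List.range n).map g) ξ) :
    G ↪g H where
  toFun := g
  inj' i j he := by
    have hlen : ∀ k ≤ max i j, k < ((List.range (max i j + 1)).map g).length := fun k hk => by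
      simp only [List.length_map, List.length_range]; omega
    exact (hg _).getElem_inj (hlen i (le_max_left i j)) (hlen j (le_max_right i j)) (by simpa)
  map_rel_iff' {i j} := by
    have hlen : ∀ k ≤ max i j, k < ((List.range (max i j + 1)).map g).length := fun k hk => by
      simp only [List.length_map, List.length_range]; omega
    change H.Adj (g i) (g j) ↔ _
    simpa using (hg _).adj_getElem_iff (hlen i (le_max_left i j)) (hlen j (le_max_right i j))

lemma nil_mem_UU
    (hemb : ∀ ξ : Ordinal, ξ < (Order.succ lam).ord →
      ∃ α : Ordinal, ξ ≤ α ∧ α < (Order.succ lam).ord ∧ Nonempty (Gg G α ↪g H)) :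
    [] ∈ UU G lam H := fun ξ hξ => by
  obtain ⟨α, hξα, hα, ⟨f⟩⟩ := hemb ξ hξ
  exact ⟨α, hξα, hα, f, [], rfl, fun i => i.elim0, by simp, by simp⟩

lemma exists_append_mem_UU (hlam : ℵ₀ ≤ lam) (hV : #V ≤ lam) (hs : s ∈ UU G lam H) :
    ∃ v, s ++ [v] ∈ UU G lam H := by
  have hlim := Cardinal.isSuccLimit_ord (hlam.trans (Order.le_succ lam))
  refine Ordinal.exists_forall_lt_of_mk_lt_cof ?_ (fun _ _ _ hle h => IsSXEmb.mono h hle)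
    fun ξ hξ => (hs _ (hlim.succ_lt hξ)).exists_append
  rw [(Cardinal.isRegular_succ hlam).cof_ord]
  exact hV.trans_lt (Order.lt_succ lam)

end Embeddings

/-- if the set of `α < λ⁺` such that `G_α` embeds into `H` is unbounded
in `λ⁺`, then `G` embeds into `H` as an induced subgraph. -/
theorem stmt8 {V : Type} (lam : Cardinal) (hlam : Cardinal.aleph0 ≤ lam)
    (G : SimpleGraph ℕ) (H : SimpleGraph V) (hV : Cardinal.mk V = lam)
    (hemb : ∀ ξ : Ordinal, ξ < (Order.succ lam).ord →
      ∃ α : Ordinal, ξ ≤ α ∧ α < (Order.succ lam).ord ∧ Nonempty (Gg G α ↪g H)) :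
    Nonempty (G ↪g H) := by
  have hO : 0 < (Order.succ lam).ord :=
    Cardinal.ord_pos.2 ((Cardinal.aleph0_pos.trans_le hlam).trans (Order.lt_succ lam))
  obtain ⟨g, hg⟩ := List.exists_seq_of_forall_exists_append (nil_mem_UU hemb)
    fun _ hs => exists_append_mem_UU hlam hV.le hs
  exact ⟨embeddingOfIsSXEmb fun n => hg n 0 hO⟩
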